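/- Let α, β ∈ ℍ be similar non-real quaternions (Re α = Re β, |α| = |β|) with β ≠ ᾱ. Then the left evaluation of the polynomial p(z) = (z − α)(z − β) at any γ in the similarity class [α] is given by p^ℓ(γ) = (γ − α)(ᾱ − β); in particular α is the only left zero of p. -/

import Mathlib

/-!
Every `γ` in the similarity class `[α]` is a root of the real quadratic `z² - 2 Re α z + |α|²`,
i.e. `γ² = γ (α + ᾱ) - α ᾱ`, and substituting this turns the left evaluation into
`(γ - α)(ᾱ - β)`. A left zero `γ ≠ α` satisfies `γ (γ - α) = (γ - α) β`, so it is conjugate to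
`β` and therefore lies in `[β] = [α]`; there the factorisation forces `γ = α` or `β = ᾱ`.
-/

open Quaternion

theorem IsConj.norm_eq {R : Type*} [NormedDivisionRing R] {a b : R} (h : IsConj a b) :
    ‖a‖ = ‖b‖ := by
  obtain ⟨c, hc, rfl⟩ := GroupWithZero.isConj_iff₀.mp h
  rw [norm_mul, norm_mul, norm_inv, mul_comm ‖c‖, mul_assoc,
    mul_inv_cancel₀ (norm_ne_zero_iff.mpr hc), mul_one]

theorem isConj_of_sq_sub_mul_add_mul_eq_zero {R : Type*} [DivisionRing R] {α β γ : R}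
    (h : γ ^ 2 - γ * (α + β) + α * β = 0) (hγα : γ ≠ α) : IsConj β γ := by
  have hq : γ - α ≠ 0 := sub_ne_zero.mpr hγα
  refine GroupWithZero.isConj_iff₀.mpr ⟨γ - α, hq, ?_⟩
  rw [mul_inv_eq_iff_eq_mul₀ hq]
  linear_combination (norm := noncomm_ring) -h

namespace Quaternion

theorem re_mul_comm (a b : ℍ[ℝ]) : (a * b).re = (b * a).re := by
  simp only [re_mul]
  ring

theorem re_eq_of_isConj {a b : ℍ[ℝ]} (h : IsConj a b) : a.re = b.re := by
  obtain ⟨c, hc, rfl⟩ := GroupWithZero.isConj_iff₀.mp h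
  rw [mul_assoc, re_mul_comm, mul_assoc, inv_mul_cancel₀ hc, mul_one]

theorem self_add_star_eq_of_re_eq {a b : ℍ[ℝ]} (h : a.re = b.re) :
    a + star a = b + star b := by
  rw [self_add_star', self_add_star', h]

theorem self_mul_star_eq_of_norm_eq {a b : ℍ[ℝ]} (h : ‖a‖ = ‖b‖) :
    a * star a = b * star b := by
  rw [self_mul_star, self_mul_star, normSq_eq_norm_mul_self, normSq_eq_norm_mul_self, h]

theorem sq_eq_of_re_eq_of_norm_eq {α γ : ℍ[ℝ]} (hre : γ.re = α.re) (hnorm : ‖γ‖ = ‖α‖) :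
    γ ^ 2 = γ * (α + star α) - α * star α := by
  rw [← self_add_star_eq_of_re_eq hre, ← self_mul_star_eq_of_norm_eq hnorm]
  noncomm_ring

theorem sq_sub_mul_add_mul_of_re_eq_of_norm_eq {α γ : ℍ[ℝ]} (β : ℍ[ℝ]) (hre : γ.re = α.re)
    (hnorm : ‖γ‖ = ‖α‖) :
    γ ^ 2 - γ * (α + β) + α * β = (γ - α) * (star α - β) := by
  rw [sq_eq_of_re_eq_of_norm_eq hre hnorm]
  noncomm_ring

end Quaternion

theorem left_eval_chain_degree_two_general (α β : Quaternion ℝ)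
    (hre : β.re = α.re) (hnorm : ‖β‖ = ‖α‖) (hne : β ≠ star α) :
    (∀ γ : Quaternion ℝ, γ.re = α.re → ‖γ‖ = ‖α‖ →
        γ ^ 2 - γ * (α + β) + α * β = (γ - α) * (star α - β)) ∧
    (∀ γ : Quaternion ℝ, γ ^ 2 - γ * (α + β) + α * β = 0 ↔ γ = α) := by
  have eval_on_class : ∀ γ : ℍ[ℝ], γ.re = α.re → ‖γ‖ = ‖α‖ →
      γ ^ 2 - γ * (α + β) + α * β = (γ - α) * (star α - β) :=
    fun γ => sq_sub_mul_add_mul_of_re_eq_of_norm_eq β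
  refine ⟨eval_on_class, fun γ => ⟨fun hzero => ?_, ?_⟩⟩
  · by_contra hγα
    have hconj : IsConj β γ := isConj_of_sq_sub_mul_add_mul_eq_zero hzero hγα
    have hfactor := eval_on_class γ ((re_eq_of_isConj hconj).symm.trans hre)
      (hconj.norm_eq.symm.trans hnorm)
    rw [hzero, eq_comm, mul_eq_zero, sub_eq_zero, sub_eq_zero] at hfactor
    exact hfactor.elim hγα fun h => hne h.symm
  · rintro rfl
    noncomm_ring

/-- For similar non-real quaternions α ∼ β with β ≠ ᾱ, the left evaluation of
p(z) = (z−α)(z−β) = z² − z(α+β) + αβ at any γ ∈ [α] equals (γ−α)(ᾱ−β);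
in particular α is the only left zero of p. -/
theorem left_eval_chain_degree_two (α β : Quaternion ℝ) (hα : α.im ≠ 0)
    (hre : β.re = α.re) (hnorm : ‖β‖ = ‖α‖) (hne : β ≠ star α) :
    (∀ γ : Quaternion ℝ, γ.re = α.re → ‖γ‖ = ‖α‖ →
        γ ^ 2 - γ * (α + β) + α * β = (γ - α) * (star α - β)) ∧
    (∀ γ : Quaternion ℝ, γ ^ 2 - γ * (α + β) + α * β = 0 ↔ γ = α) :=
  left_eval_chain_degree_two_general α β hre hnorm hne
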